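/- For every integer N ≥ 8 there exist a positive integer r and an irredundant mixed orthogonal array IrMOA(r, 1+N, 3¹2^N, 2), i.e. an IrMOA of strength 2 with one column of 3 levels and N columns of 2 levels. -/

import Mathlib

open Finset

/-- The Hamming distance between two rows of an array: the number of columns
in which the rows differ. -/
def hamDist {ι κ : Type*} [Fintype κ] (A : ι → κ → ℕ) (i i' : ι) : ℕ :=
  (Finset.univ.filter fun j => A i j ≠ A i' j).card

/-- `MD(A)`: the minimum Hamming distance over all pairs of distinct rows. -/
noncomputable def minDist {ι κ : Type*} [Fintype κ] (A : ι → κ → ℕ) : ℕ :=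
  sInf {n | ∃ i i', i ≠ i' ∧ hamDist A i i' = n}

/-- `A` is a mixed orthogonal array of strength `k` (rows indexed by `ι`,
columns by `κ`, column `j` taking values in `{0, …, lv j − 1}`): in the
subarray given by any choice of at most `k` columns, every tuple of symbols
occurs equally often as a row, namely (number of rows)/(product of the levels
of the chosen columns) times. -/
def IsMOA {ι κ : Type*} [Fintype ι] [Fintype κ] [DecidableEq κ]
    (A : ι → κ → ℕ) (lv : κ → ℕ) (k : ℕ) : Prop :=
  (∀ i j, A i j < lv j) ∧
  ∀ S : Finset κ, S.card ≤ k → ∀ x : κ → ℕ, (∀ j ∈ S, x j < lv j) →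
    (Finset.univ.filter fun i : ι => ∀ j ∈ S, A i j = x j).card * ∏ j ∈ S, lv j
      = Fintype.card ι

/-- An irredundant mixed orthogonal array of strength `k`: an MOA of strength
`k` any two distinct rows of which have Hamming distance at least `k+1`. -/
def IsIrMOA {ι κ : Type*} [Fintype ι] [Fintype κ] [DecidableEq κ]
    (A : ι → κ → ℕ) (lv : κ → ℕ) (k : ℕ) : Prop :=
  IsMOA A lv k ∧ ∀ i i' : ι, i ≠ i' → k + 1 ≤ hamDist A i i'

/-- A difference scheme `D(r, c, d)`: an `r × c` matrix over `ℤ_d` such that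
for any two distinct columns the `r` differences of corresponding entries
take each value of `ℤ_d` exactly `r/d` times. -/
def IsDiffScheme {r c d : ℕ} (B : Fin r → Fin c → ZMod d) : Prop :=
  ∀ j j' : Fin c, j ≠ j' → ∀ g : ZMod d,
    (Finset.univ.filter fun i : Fin r => B i j - B i j' = g).card * d = r

/-! Let `m = ⌊N/3⌋` and let `G` be the graph obtained from `K_{3,m}` by adding `N mod 3` edges
between the three vertices ("hubs") of its 3-side; it is simple and has `N` edges. Its binary
cycle code `C` (the kernel of the incidence matrix) has minimum distance at least 3, because a
nonempty even subgraph of a simple graph has at least three edges. It is an orthogonal array of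
strength 2, because for any two edges `e ≠ e'` some 3- or 4-cycle passes through `e` but not `e'`,
so `C` projects onto every pair of coordinates.

Stacking three cosets `C + w₀, C + w₁, C + w₂` and tagging the rows of the `a`-th coset with
the symbol `a` in an extra 3-level column keeps strength 2. If no difference `wₐ - wₐ'` has the
syndrome of `0` or of a single edge, every vector of `(C + wₐ) - (C + wₐ')` has weight at least 2,
so rows from different cosets differ in at least `1 + 2` columns. -/

open Function

theorem ZMod.val_eq_iff_eq_natCast {n : ℕ} [NeZero n] (z : ZMod n) {x : ℕ} (hx : x < n) :
    z.val = x ↔ z = x :=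
  ⟨fun h => h ▸ (ZMod.natCast_zmod_val z).symm, fun h => h ▸ ZMod.val_cast_of_lt hx⟩

theorem ZMod.eq_one_of_ne_zero_two {z : ZMod 2} (h : z ≠ 0) : z = 1 := by
  revert z
  decide

theorem ZMod.pi_two_eq_zero (α : Type*) : (2 : α → ZMod 2) = 0 := rfl

theorem Fintype.exists_ne_ne_of_three_le_card {α : Type*} [Fintype α] [DecidableEq α]
    (h : 3 ≤ Fintype.card α) (x y : α) : ∃ z, z ≠ x ∧ z ≠ y := by
  by_contra! hxy
  have hsub : (univ : Finset α) ⊆ {x, y} := fun z _ => by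
    by_cases hz : z = x
    · simp [hz]
    · simp [hxy z hz]
  have := (card_le_card hsub).trans card_le_two
  rw [card_univ] at this
  omega

theorem Finset.exists_ne_subset_pair {α : Type*} [DecidableEq α] [Nontrivial α] {T : Finset α}
    {j : α} (hT : #T ≤ 2) (hj : j ∈ T) : ∃ j' ≠ j, T ⊆ {j, j'} := by
  obtain ⟨a, ha⟩ := card_le_one_iff_subset_singleton.1
    (show #(T.erase j) ≤ 1 by rw [card_erase_of_mem hj]; omega)
  have hT : ∀ t ∈ T, t ≠ j → t = a := fun t ht htj => mem_singleton.1 (ha (mem_erase.2 ⟨htj, ht⟩))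
  by_cases haj : a = j
  · obtain ⟨j', hj'⟩ := exists_ne j
    refine ⟨j', hj', fun t ht => ?_⟩
    by_cases htj : t = j
    · simp [htj]
    · exact absurd (haj ▸ hT t ht htj) htj
  · refine ⟨a, haj, fun t ht => ?_⟩
    by_cases htj : t = j
    · simp [htj]
    · simp [hT t ht htj]

theorem Finset.card_filter_prod {α β : Type*} [Fintype α] [Fintype β] (P : α → Prop)
    (Q : α → β → Prop) [DecidablePred P] [∀ a, DecidablePred (Q a)] :
    #{p : α × β | P p.1 ∧ Q p.1 p.2} = ∑ a, if P a then #{b | Q a b} else 0 := by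
  simp only [card_filter, Fintype.sum_prod_type, ite_and, sum_ite_irrel, sum_const_zero]

theorem card_fiber_mul_card_of_surjective {G M F : Type*} [AddGroup G] [Fintype G] [AddMonoid M]
    [Fintype M] [DecidableEq M] [FunLike F G M] [AddMonoidHomClass F G M] (f : F)
    (hf : Surjective f) (y : M) : #{g | f g = y} * Fintype.card M = Fintype.card G := by
  calc #{g | f g = y} * Fintype.card M = ∑ z : M, #{g | f g = z} := by
        rw [sum_congr rfl fun z _ => AddMonoidHom.card_fiber_eq_of_mem_range f (hf z) (hf y),
          sum_const, card_univ, smul_eq_mul, mul_comm]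
    _ = Fintype.card G := (card_eq_sum_card_fiberwise fun _ _ => mem_univ _).symm

section Reindex

variable {ι ι' κ κ' : Type*} [Fintype κ] [Fintype κ'] {A : ι → κ → ℕ} {lv : κ → ℕ} {k : ℕ}

theorem hamDist_reindex (e : ι' ≃ ι) (f : κ' ≃ κ) (i i' : ι') :
    hamDist (fun i c => A (e i) (f c)) i i' = hamDist A (e i) (e i') :=
  card_equiv f (by simp)

variable [Fintype ι] [Fintype ι'] [DecidableEq κ] [DecidableEq κ']

theorem IsMOA.reindex (h : IsMOA A lv k) (e : ι' ≃ ι) (f : κ' ≃ κ) :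
    IsMOA (fun i c => A (e i) (f c)) (lv ∘ f) k := by
  refine ⟨fun i c => h.1 _ _, fun S hS x hx => ?_⟩
  have hcount := h.2 (S.map f.toEmbedding) (by simpa using hS) (x ∘ f.symm)
    (by simpa [← f.forall_congr_right] using hx)
  rw [Fintype.card_congr e, ← hcount, prod_map]
  congr 1
  exact card_equiv e fun i => by simp [← f.forall_congr_right]

theorem IsIrMOA.reindex (h : IsIrMOA A lv k) (e : ι' ≃ ι) (f : κ' ≃ κ) :
    IsIrMOA (fun i c => A (e i) (f c)) (lv ∘ f) k :=
  ⟨h.1.reindex e f, fun i i' hii' => by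
    rw [hamDist_reindex]
    exact h.2 _ _ (e.injective.ne hii')⟩

end Reindex

section Stack

variable {ι κ : Type*} [Fintype κ] {d : ℕ}

def stack (B : Fin d → ι → κ → ℕ) : Fin d × ι → Unit ⊕ κ → ℕ :=
  fun p => Sum.elim (fun _ => p.1.val) (B p.1 p.2)

theorem hamDist_stack (B : Fin d → ι → κ → ℕ) (p q : Fin d × ι) :
    hamDist (stack B) p q = (if p.1 = q.1 then 0 else 1) + hammingDist (B p.1 p.2) (B q.1 q.2) := by
  rw [hamDist, card_filter, Fintype.sum_sum_type, hammingDist, card_filter]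
  congr 1
  by_cases h : p.1 = q.1 <;> simp [stack, h, Fin.val_inj]

theorem isMOA_stack [Fintype ι] [DecidableEq κ] {B : Fin d → ι → κ → ℕ} {lv : κ → ℕ} {k : ℕ}
    (hB : ∀ a, IsMOA (B a) lv k) : IsMOA (stack B) (Sum.elim (fun _ => d) lv) k := by
  refine ⟨fun p c => ?_, fun S hS x hx => ?_⟩
  · cases c
    exacts [p.1.isLt, (hB p.1).1 _ _]
  have hslice : ∀ a, #{i | ∀ j ∈ S.toRight, B a i j = x (.inr j)} * ∏ j ∈ S.toRight, lv j
      = Fintype.card ι := fun a =>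
    (hB a).2 _ (card_toRight_le.trans hS) _ fun j hj => hx _ (mem_toRight.1 hj)
  have hsplit : #{p : Fin d × ι | ∀ c ∈ S, stack B p c = x c}
      = ∑ a : Fin d, if ∀ u ∈ S.toLeft, a.val = x (.inl u)
          then #{i | ∀ j ∈ S.toRight, B a i j = x (.inr j)} else 0 := by
    rw [← card_filter_prod]
    simp [stack, Sum.forall]
  rw [hsplit, prod_sum_eq_prod_toLeft_mul_prod_toRight, Fintype.card_prod, Fintype.card_fin]
  simp only [Sum.elim_inl, Sum.elim_inr]
  rcases S.toLeft.eq_empty_or_nonempty with hL | hL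
  · simp only [hL, notMem_empty, IsEmpty.forall_iff, forall_const, if_true, prod_empty, one_mul,
      sum_mul, hslice, sum_const, card_univ, Fintype.card_fin, smul_eq_mul]
  · have hx0 : x (.inl ()) < d := hx _ (mem_toLeft.1 (hL.eq_univ ▸ mem_univ ()))
    simp only [hL.eq_univ, mem_univ, Unique.forall_iff, prod_const, card_univ,
      Fintype.card_unit, pow_one]
    rw [Fintype.sum_eq_single ⟨_, hx0⟩ fun a ha => if_neg fun h => ha (Fin.ext h), if_pos rfl,
      ← hslice ⟨_, hx0⟩]
    ring

end Stack

section BinaryCode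

variable {κ : Type*} [Fintype κ] {C : Submodule (ZMod 2) (κ → ZMod 2)}

def cosetArray (C : Submodule (ZMod 2) (κ → ZMod 2)) (w : κ → ZMod 2) : C → κ → ℕ :=
  fun v j => (v.1 j + w j).val

theorem hammingDist_cosetArray (w w' : κ → ZMod 2) (v v' : C) :
    hammingDist (cosetArray C w v) (cosetArray C w' v') = hammingNorm (v.1 - v'.1 + (w - w')) := by
  change hammingDist (fun j => ZMod.val ((v.1 + w) j)) (fun j => ZMod.val ((v'.1 + w') j)) = _
  rw [hammingDist_comp (fun _ => ZMod.val) fun _ => ZMod.val_injective 2,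
    hammingDist_comm, hammingDist_eq_hammingNorm]
  congr 1
  abel

variable [DecidableEq κ]

def restrictCoords (C : Submodule (ZMod 2) (κ → ZMod 2)) (T : Finset κ) :
    C →ₗ[ZMod 2] (T → ZMod 2) :=
  (LinearMap.funLeft (ZMod 2) (ZMod 2) ((↑) : T → κ)).comp C.subtype

theorem restrictCoords_surjective {T : Finset κ}
    (hT : ∀ j ∈ T, ∃ v ∈ C, ∀ j' ∈ T, v j' = if j' = j then 1 else 0) :
    Surjective (restrictCoords C T) := by
  refine LinearMap.range_eq_top.1 (eq_top_iff.2 ?_)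
  rw [← (Pi.basisFun (ZMod 2) T).span_eq, Submodule.span_le]
  rintro _ ⟨t, rfl⟩
  obtain ⟨v, hv, hvt⟩ := hT t t.2
  refine ⟨⟨v, hv⟩, funext fun t' => ?_⟩
  rw [Pi.basisFun_apply]
  change v t' = _
  rw [hvt _ t'.2, Pi.single_apply]
  exact if_congr Subtype.ext_iff.symm rfl rfl

theorem restrictCoords_surjective_of_separating [Nontrivial κ]
    (hsep : ∀ j j', j' ≠ j → ∃ v ∈ C, v j = 1 ∧ v j' = 0) {T : Finset κ} (hT : #T ≤ 2) :
    Surjective (restrictCoords C T) := by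
  refine restrictCoords_surjective fun j hj => ?_
  obtain ⟨j', hj'j, hTj⟩ := exists_ne_subset_pair hT hj
  obtain ⟨v, hv, hvj, hvj'⟩ := hsep j j' hj'j
  refine ⟨v, hv, fun t ht => ?_⟩
  rcases mem_insert.1 (hTj ht) with rfl | h
  · simpa using hvj
  · rw [mem_singleton.1 h, hvj', if_neg hj'j]

theorem isMOA_cosetArray [Fintype C] {k : ℕ}
    (hC : ∀ T : Finset κ, #T ≤ k → Surjective (restrictCoords C T)) (w : κ → ZMod 2) :
    IsMOA (cosetArray C w) (fun _ => 2) k := by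
  refine ⟨fun v j => ZMod.val_lt _, fun S hS x hx => ?_⟩
  set y : S → ZMod 2 := fun j => (x j : ZMod 2) - w j
  have hfiber : ∀ v : C, (∀ j ∈ S, cosetArray C w v j = x j) ↔ restrictCoords C S v = y :=
    fun v => by
      simp only [funext_iff, Subtype.forall]
      refine forall₂_congr fun j hj => ?_
      rw [cosetArray, ZMod.val_eq_iff_eq_natCast _ (hx j hj), eq_sub_iff_add_eq]
      rfl
  rw [filter_congr fun v _ => hfiber v, prod_const,
    ← card_fiber_mul_card_of_surjective _ (hC S hS) y]
  simp

end BinaryCode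

section ParityCode

variable {κ V : Type*} [Fintype κ]

def parityCode (H : κ → V → ZMod 2) : Submodule (ZMod 2) (κ → ZMod 2) :=
  LinearMap.ker (Fintype.linearCombination (ZMod 2) H)

theorem linearCombination_eq_sum_support (H : κ → V → ZMod 2) (x : κ → ZMod 2) :
    Fintype.linearCombination (ZMod 2) H x = ∑ j ∈ {j | x j ≠ 0}, H j := by
  rw [Fintype.linearCombination_apply, ← sum_filter_of_ne fun j _ h => left_ne_zero_of_smul h]
  refine sum_congr rfl fun j hj => ?_
  rw [ZMod.eq_one_of_ne_zero_two (mem_filter.1 hj).2, one_smul]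

variable {H : κ → V → ZMod 2} {x : κ → ZMod 2}

theorem two_le_hammingNorm_of_notMem
    (hx : Fintype.linearCombination (ZMod 2) H x ∉ insert 0 (Set.range H)) :
    2 ≤ hammingNorm x := by
  rw [linearCombination_eq_sum_support] at hx
  by_contra! h
  obtain h0 | h1 : hammingNorm x = 0 ∨ hammingNorm x = 1 := by omega
  · rw [hammingNorm, card_eq_zero] at h0
    simp [h0] at hx
  · obtain ⟨j, hj⟩ := card_eq_one.1 h1
    rw [hj, sum_singleton] at hx
    exact hx (Set.mem_insert_of_mem _ ⟨j, rfl⟩)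

theorem three_le_hammingNorm_of_mem_parityCode [DecidableEq κ] (hinj : Injective H)
    (hne : ∀ j, H j ≠ 0) (hx : x ∈ parityCode H) (hx0 : x ≠ 0) : 3 ≤ hammingNorm x := by
  have hsyn : ∑ j ∈ {j | x j ≠ 0}, H j = 0 := by
    rw [← linearCombination_eq_sum_support]
    exact hx
  have hpos := hammingNorm_pos_iff.2 hx0
  by_contra! h
  obtain h1 | h2 : hammingNorm x = 1 ∨ hammingNorm x = 2 := by omega
  · obtain ⟨j, hj⟩ := card_eq_one.1 h1
    rw [hj, sum_singleton] at hsyn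
    exact hne j hsyn
  · obtain ⟨j, j', hjj', hj⟩ := card_eq_two.1 h2
    rw [hj, sum_pair hjj'] at hsyn
    exact hjj' (hinj (funext fun v => CharTwo.add_eq_zero.1 (congrFun hsyn v)))

end ParityCode

section Incidence

variable {V : Type*} [DecidableEq V]

def incidenceCol (z : Sym2 V) : V → ZMod 2 := fun v => if v ∈ z then 1 else 0

theorem incidenceCol_injective : Injective (incidenceCol (V := V)) := fun z z' h =>
  Sym2.ext fun v => by
    have := congrFun h v
    by_cases hz : v ∈ z <;> by_cases hz' : v ∈ z' <;> simp_all [incidenceCol]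

theorem incidenceCol_ne_zero (z : Sym2 V) : incidenceCol z ≠ 0 := by
  induction z using Sym2.ind with
  | h u v => exact fun h => by simpa [incidenceCol] using congrFun h u

theorem incidenceCol_mk {u v : V} (h : u ≠ v) :
    incidenceCol s(u, v) = Pi.single u 1 + Pi.single v 1 := by
  ext x
  by_cases hu : x = u <;> by_cases hv : x = v <;> simp_all [incidenceCol]

end Incidence

namespace HubGraph

variable {m : ℕ} {t : Finset (Fin 3)}

abbrev Edge (m : ℕ) (t : Finset (Fin 3)) := (Fin 3 × Fin m) ⊕ t

def edgeEnds : Edge m t → Sym2 (Fin 3 ⊕ Fin m)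
  | .inl (a, i) => s(.inl a, .inr i)
  | .inr k => s(.inl k, .inl (k + 1))

theorem edgeEnds_injective : Injective (edgeEnds (m := m) (t := t)) := by
  have hrim : ∀ k k' : Fin 3, ¬(k = k' + 1 ∧ k + 1 = k') := by decide
  rintro (⟨a, i⟩ | k) (⟨b, j⟩ | k') h <;> simp [edgeEnds] at h
  · simp [h]
  · rcases h with h | h
    · rw [h]
    · exact absurd h (hrim _ _)

variable (m t) in
def code : Submodule (ZMod 2) (Edge m t → ZMod 2) := parityCode (incidenceCol ∘ edgeEnds)

local notation "syndrome" =>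
  Fintype.linearCombination (ZMod 2) (incidenceCol ∘ edgeEnds (m := m) (t := t))

theorem syndrome_single (e : Edge m t) : syndrome (Pi.single e 1) = incidenceCol (edgeEnds e) := by
  rw [Fintype.linearCombination_apply_single, one_smul, comp_apply]

theorem incidenceCol_edgeEnds_inl (a : Fin 3) (i : Fin m) :
    incidenceCol (edgeEnds (t := t) (.inl (a, i))) = Pi.single (.inl a) 1 + Pi.single (.inr i) 1 :=
  incidenceCol_mk Sum.inl_ne_inr

theorem incidenceCol_edgeEnds_inr (k : t) :
    incidenceCol (edgeEnds (m := m) (.inr k)) = Pi.single (.inl k) 1 + Pi.single (.inl (k + 1)) 1 :=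
  incidenceCol_mk (Sum.inl_injective.ne (add_ne_left.2 one_ne_zero).symm)

def square (a c : Fin 3) (i i' : Fin m) : Edge m t → ZMod 2 :=
  Pi.single (.inl (a, i)) 1 + Pi.single (.inl (c, i)) 1 + Pi.single (.inl (c, i')) 1
    + Pi.single (.inl (a, i')) 1

def triangle (k : t) (i : Fin m) : Edge m t → ZMod 2 :=
  Pi.single (.inr k) 1 + Pi.single (.inl (k, i)) 1 + Pi.single (.inl (k + 1, i)) 1

theorem square_mem_code (a c : Fin 3) (i i' : Fin m) : square (t := t) a c i i' ∈ code m t := by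
  rw [code, parityCode, LinearMap.mem_ker, square]
  simp only [map_add, syndrome_single, incidenceCol_edgeEnds_inl]
  linear_combination (Pi.single (.inl a) 1 + Pi.single (.inl c) 1 + Pi.single (.inr i) 1
    + Pi.single (.inr i') 1 : Fin 3 ⊕ Fin m → ZMod 2) * ZMod.pi_two_eq_zero _

theorem triangle_mem_code (k : t) (i : Fin m) : triangle k i ∈ code m t := by
  rw [code, parityCode, LinearMap.mem_ker, triangle]
  simp only [map_add, syndrome_single, incidenceCol_edgeEnds_inl, incidenceCol_edgeEnds_inr]
  linear_combination (Pi.single (.inl k) 1 + Pi.single (.inl (k + 1)) 1 + Pi.single (.inr i) 1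
    : Fin 3 ⊕ Fin m → ZMod 2) * ZMod.pi_two_eq_zero _

theorem exists_mem_code_separating (hm : 2 ≤ m) (hmt : 3 ≤ m ∨ 2 ≤ #t) :
    ∀ e e' : Edge m t, e' ≠ e → ∃ v ∈ code m t, v e = 1 ∧ v e' = 0 := by
  have hleaf : 1 < Fintype.card (Fin m) := by rw [Fintype.card_fin]; omega
  have hne : ∀ k : Fin 3, k ≠ k + 1 := fun k => (add_ne_left.2 one_ne_zero).symm
  have hthird : ∀ a b : Fin 3, ∃ c, c ≠ a ∧ c ≠ b := by decide
  have hrim : ∀ t : Finset (Fin 3), 2 ≤ #t → ∀ b, ∃ k ∈ t, b = k ∨ b = k + 1 := by decide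
  rintro (⟨a, i⟩ | k) e' he'
  · obtain ⟨i'', hi''⟩ := Fintype.exists_ne_of_one_lt_card hleaf i
    rcases e' with ⟨b, i'⟩ | k'
    · by_cases hba : b = a
      · subst hba
        have hi' : i' ≠ i := by simpa using he'
        -- with a third leaf a 4-cycle avoids the spoke `(b, i')`; otherwise a triangle
        -- through a rim edge at `b` does
        rcases hmt with hm3 | ht2
        · obtain ⟨j, hji, hji'⟩ := Fintype.exists_ne_ne_of_three_le_card (by simpa using hm3) i i'
          obtain ⟨c, hcb⟩ := Fintype.exists_ne_of_one_lt_card (by simp) b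
          exact ⟨square b c i j, square_mem_code .., by simp [square, hcb, hji],
            by simp [square, hcb, hji', hi']⟩
        · obtain ⟨k, hk, hbk⟩ := hrim t ht2 b
          refine ⟨triangle ⟨k, hk⟩ i, triangle_mem_code .., ?_, by simp [triangle, hi']⟩
          rcases hbk with rfl | rfl <;> simp [triangle, hne]
      · obtain ⟨c, hca, hcb⟩ := hthird a b
        exact ⟨square a c i i'', square_mem_code .., by simp [square, hca, hi''],
          by simp [square, hcb, hba]⟩
    · obtain ⟨c, hca⟩ := Fintype.exists_ne_of_one_lt_card (by simp) a
      exact ⟨square a c i i'', square_mem_code .., by simp [square, hca, hi''], by simp [square]⟩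
  · rcases e' with ⟨b, i'⟩ | k'
    · obtain ⟨i, hi⟩ := Fintype.exists_ne_of_one_lt_card hleaf i'
      exact ⟨triangle k i, triangle_mem_code .., by simp [triangle],
        by simp [triangle, Ne.symm hi]⟩
    · exact ⟨triangle k ⟨0, by omega⟩, triangle_mem_code .., by simp [triangle],
        by simp [triangle, he']⟩

theorem notMem_of_hub_eq_zero {σ : Fin 3 ⊕ Fin m → ZMod 2} (hσ : σ ≠ 0)
    (hhub : ∀ a, σ (.inl a) = 0) :
    σ ∉ insert 0 (Set.range (incidenceCol ∘ edgeEnds (t := t))) := by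
  rintro (h0 | ⟨⟨a, i⟩ | k, rfl⟩)
  · exact hσ h0
  · simpa [incidenceCol, edgeEnds] using hhub a
  · simpa [incidenceCol, edgeEnds] using hhub k

theorem notMem_of_hub_eq_one {σ : Fin 3 ⊕ Fin m → ZMod 2} (hhub : ∀ a, σ (.inl a) = 1) :
    σ ∉ insert 0 (Set.range (incidenceCol ∘ edgeEnds (t := t))) := by
  have hne : ∀ k : Fin 3, k + 1 ≠ k := fun k => add_ne_left.2 one_ne_zero
  have hne2 : ∀ k : Fin 3, k + 1 + 1 ≠ k ∧ k + 1 + 1 ≠ k + 1 := by decide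
  rintro (h0 | ⟨⟨a, i⟩ | k, rfl⟩)
  · simpa [h0] using hhub 0
  · simpa [incidenceCol, edgeEnds, hne] using hhub (a + 1)
  · simpa [incidenceCol, edgeEnds, hne2] using hhub (k + 1 + 1)

-- The syndrome of a difference of two distinct shifts is either nonzero but zero on every hub,
-- or one on every hub; no edge column has either shape.
def shift (i₀ i₁ : Fin m) : Fin 3 → Edge m t → ZMod 2 :=
  ![0, Pi.single (.inl (0, i₀)) 1 + Pi.single (.inl (0, i₁)) 1,
    Pi.single (.inl (0, i₁)) 1 + Pi.single (.inl (1, i₀)) 1 + Pi.single (.inl (2, i₀)) 1]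

theorem syndrome_shift_one (i₀ i₁ : Fin m) :
    syndrome (shift i₀ i₁ 1) = Pi.single (.inr i₀) 1 + Pi.single (.inr i₁) 1 := by
  simp only [shift, Matrix.cons_val_one, Matrix.cons_val_zero, map_add, syndrome_single,
    incidenceCol_edgeEnds_inl]
  linear_combination (Pi.single (.inl 0) 1 : Fin 3 ⊕ Fin m → ZMod 2) * ZMod.pi_two_eq_zero _

theorem syndrome_shift_two (i₀ i₁ : Fin m) :
    syndrome (shift i₀ i₁ 2) = Pi.single (.inl 0) 1 + Pi.single (.inl 1) 1
      + Pi.single (.inl 2) 1 + Pi.single (.inr i₁) 1 := by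
  simp only [shift, Matrix.cons_val_two, Matrix.tail_cons, Matrix.head_cons, map_add,
    syndrome_single, incidenceCol_edgeEnds_inl]
  linear_combination (Pi.single (.inr i₀) 1 : Fin 3 ⊕ Fin m → ZMod 2) * ZMod.pi_two_eq_zero _

theorem syndrome_shift_sub_notMem {i₀ i₁ : Fin m} (hi : i₀ ≠ i₁) {a a' : Fin 3} (ha : a ≠ a') :
    syndrome (shift i₀ i₁ a - shift i₀ i₁ a')
      ∉ insert 0 (Set.range (incidenceCol ∘ edgeEnds (t := t))) := by
  have h0 : syndrome (shift i₀ i₁ 0) = 0 := by simp [shift]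
  have hzero : ∀ b : Fin 3, syndrome (shift i₀ i₁ 1) (.inl b) = 0 := by
    simp [syndrome_shift_one]
  have hone : ∀ b : Fin 3, syndrome (shift i₀ i₁ 2) (.inl b) = 1 := by
    intro b
    fin_cases b <;> simp [syndrome_shift_two]
  have hleaf : syndrome (shift i₀ i₁ 1) (.inr i₀) = 1 := by simp [syndrome_shift_one, hi.symm]
  rw [map_sub]
  fin_cases a <;> fin_cases a'
  all_goals first
    | exact absurd rfl ha
    | exact notMem_of_hub_eq_zero (fun h => by simpa [h0, hleaf] using congrFun h (.inr i₀))
        fun b => by simp [h0, hzero]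
    | exact notMem_of_hub_eq_one fun b => by simp [h0, hzero, hone]

theorem isIrMOA_stack_shift [Fintype (code m t)] (hm : 2 ≤ m) (hmt : 3 ≤ m ∨ 2 ≤ #t)
    {i₀ i₁ : Fin m} (hi : i₀ ≠ i₁) :
    IsIrMOA (stack fun a => cosetArray (code m t) (shift i₀ i₁ a))
      (Sum.elim (fun _ => 3) fun _ => 2) 2 := by
  have : Nontrivial (Edge m t) := ⟨⟨.inl (0, i₀), .inl (0, i₁), by simpa using hi⟩⟩
  refine ⟨isMOA_stack fun a => isMOA_cosetArray (fun T hT =>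
    restrictCoords_surjective_of_separating (exists_mem_code_separating hm hmt) hT) _, ?_⟩
  rintro ⟨a, v⟩ ⟨a', v'⟩ hne
  have hvv' : v.1 - v'.1 ∈ code m t := sub_mem v.2 v'.2
  rw [hamDist_stack, hammingDist_cosetArray]
  dsimp only
  by_cases ha : a = a'
  · subst ha
    have hv : v.1 - v'.1 ≠ 0 := sub_ne_zero.2 fun h => hne (by rw [Subtype.ext h])
    simpa using three_le_hammingNorm_of_mem_parityCode
      (incidenceCol_injective.comp edgeEnds_injective) (fun e => incidenceCol_ne_zero _) hvv' hv
  · have h2 : 2 ≤ hammingNorm (v.1 - v'.1 + (shift i₀ i₁ a - shift i₀ i₁ a')) := by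
      apply two_le_hammingNorm_of_notMem
      rw [map_add, LinearMap.mem_ker.1 hvv', zero_add]
      exact syndrome_shift_sub_notMem hi ha
    rw [if_neg ha]
    omega

end HubGraph

/-- For every `N ≥ 8` there exist `r > 0` and an irredundant
mixed orthogonal array `IrMOA(r, 1+N, 3¹2^N, 2)`: one column of 3 levels and
`N` columns of 2 levels, of strength 2. -/
theorem statement6 (N : ℕ) (hN : 8 ≤ N) :
    ∃ (r : ℕ) (C : Fin r → (Unit ⊕ Fin N) → ℕ),
      0 < r ∧ IsIrMOA C (Sum.elim (fun _ => 3) fun _ => 2) 2 := by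
  classical
  obtain ⟨t, -, ht⟩ := exists_subset_card_eq (show N % 3 ≤ #(univ : Finset (Fin 3)) by simp; omega)
  have hcard : Fintype.card (Fin N) = Fintype.card (HubGraph.Edge (N / 3) t) := by
    simp [ht]
    omega
  have hA := HubGraph.isIrMOA_stack_shift (m := N / 3) (t := t) (i₀ := ⟨0, by omega⟩)
    (i₁ := ⟨1, by omega⟩) (by omega) (by omega) (by simp)
  set f := Equiv.sumCongr (Equiv.refl Unit) (Fintype.equivOfCardEq hcard)
  have hlv : (Sum.elim (fun _ => 3) fun _ => 2) ∘ f = Sum.elim (fun _ => 3) fun _ => 2 :=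
    funext fun c => by cases c <;> rfl
  exact ⟨_, _, Fintype.card_pos, hlv ▸ hA.reindex (Fintype.equivFin _).symm f⟩
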